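/- Let G be a finite group acting on a finite set S, and let ℤ[S] be the associated permutation G-module (free abelian group on S with G permuting the basis). Then the first group cohomology H^1(G, ℤ[S]) vanishes. -/

import Mathlib

/-!
Write a 1-cocycle `f : G → M[S]` coefficientwise as `F g s`. For fixed `s`, `F · s` restricted to
the stabilizer of `s` is an additive homomorphism into `M`; as the stabilizer is finite and `M` is
torsion-free it vanishes. Hence `F k (k • s)` depends only on the point `k • s`, so choosing for each
`s` an element `t s` carrying it to a fixed representative of its orbit, `b s := F (t s) (t s • s)`
satisfies `F g s = b (g⁻¹ • s) - b s`, i.e. `f` is the coboundary of `b`.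
-/

universe u

open groupCohomology MulAction

/-- The identity `f (g * h) = g • f h + f g` for `f : G → M[S]`, read coefficientwise. -/
def IsPermutationCocycle {G S M : Type*} [Group G] [MulAction G S] [AddCommGroup M]
    (F : G → S → M) : Prop :=
  ∀ (g h : G) (s : S), F (g * h) s = F h (g⁻¹ • s) + F g s

namespace IsPermutationCocycle

variable {G S M : Type*} [Group G] [MulAction G S] [AddCommGroup M] {F : G → S → M}

theorem map_one (hF : IsPermutationCocycle F) (s : S) : F 1 s = 0 := by
  simpa using hF 1 1 s

theorem apply_pow_of_smul_eq (hF : IsPermutationCocycle F) {u : G} {s : S} (hu : u • s = s)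
    (n : ℕ) : F (u ^ n) s = n • F u s := by
  have hu' : u⁻¹ • s = s := inv_smul_eq_iff.2 hu.symm
  induction n with
  | zero => simp [hF.map_one]
  | succ n ih => rw [pow_succ', hF, hu', ih, succ_nsmul]

theorem apply_eq_zero_of_smul_eq [IsAddTorsionFree M] (hF : IsPermutationCocycle F) {u : G}
    (hu : IsOfFinOrder u) {s : S} (hus : u • s = s) : F u s = 0 := by
  have h := hF.apply_pow_of_smul_eq hus (orderOf u)
  rw [pow_orderOf_eq_one, hF.map_one] at h
  exact (nsmul_eq_zero_iff_right hu.orderOf_pos.ne').1 h.symm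

theorem apply_smul_eq_of_smul_eq [Finite G] [IsAddTorsionFree M] (hF : IsPermutationCocycle F)
    {k k' : G} {s : S} (h : k • s = k' • s) : F k (k • s) = F k' (k • s) := by
  have hfix : (k' * k⁻¹) • k • s = k • s := by rw [mul_smul, inv_smul_smul, h]
  have hcocycle := hF (k' * k⁻¹) k (k • s)
  rw [inv_mul_cancel_right, hF.apply_eq_zero_of_smul_eq (isOfFinOrder_of_finite _) hfix,
    add_zero, inv_smul_eq_iff.2 hfix.symm] at hcocycle
  exact hcocycle.symm

theorem exists_eq_sub [Finite G] [IsAddTorsionFree M] (hF : IsPermutationCocycle F) :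
    ∃ b : S → M, ∀ (g : G) (s : S), F g s = b (g⁻¹ • s) - b s := by
  have hrep (s : S) : ∃ k : G, k • s = (⟦s⟧ : orbitRel.Quotient G S).out :=
    mem_orbit_iff.1 (Quotient.mk_out (s := orbitRel G S) s)
  choose t ht using hrep
  refine ⟨fun s => F (t s) (t s • s), fun g s => ?_⟩
  have horbit : (⟦g⁻¹ • s⟧ : orbitRel.Quotient G S) = ⟦s⟧ := Quotient.sound ⟨g⁻¹, rfl⟩
  have hsame : t (g⁻¹ • s) • g⁻¹ • s = (t s * g) • g⁻¹ • s := by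
    rw [ht, horbit, mul_smul, smul_inv_smul, ht]
  have hcocycle := hF (t s) g (t s • s)
  rw [inv_smul_smul] at hcocycle
  dsimp only
  rw [hF.apply_smul_eq_of_smul_eq hsame, hsame, mul_smul, smul_inv_smul, hcocycle,
    add_sub_cancel_right]

end IsPermutationCocycle

namespace groupCohomology

variable {k G S : Type u} [CommRing k] [Group G] [MulAction G S]

theorem isPermutationCocycle_coeff (f : cocycles₁ (Rep.ofMulAction k G S)) :
    IsPermutationCocycle fun g s => (f g).coeff s := fun g h s => by
  dsimp only
  rw [(mem_cocycles₁_iff f).1 f.2 g h]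
  simp

theorem mem_coboundaries₁_ofMulAction [Finite G] [Finite S] [IsAddTorsionFree k]
    (f : cocycles₁ (Rep.ofMulAction k G S)) : ⇑f ∈ coboundaries₁ (Rep.ofMulAction k G S) := by
  obtain ⟨b, hb⟩ := (isPermutationCocycle_coeff f).exists_eq_sub
  refine ⟨MonoidAlgebra.ofCoeff (Finsupp.equivFunOnFinite.symm b), funext fun g => ?_⟩
  apply MonoidAlgebra.coeff_injective
  ext s
  rw [d₀₁_hom_apply]
  simp [hb]

theorem subsingleton_H1_ofMulAction [Finite G] [Finite S] [IsAddTorsionFree k] :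
    Subsingleton (H1 (Rep.ofMulAction k G S)) :=
  subsingleton_of_forall_eq 0 fun x => H1_induction_on x fun f =>
    (H1π_eq_zero_iff f).2 (mem_coboundaries₁_ofMulAction f)

end groupCohomology

theorem stmt_0 (G : Type) [Group G] [Finite G] (S : Type) [Finite S] [MulAction G S] :
    Subsingleton (groupCohomology (Rep.ofMulAction ℤ G S) 1) :=
  groupCohomology.subsingleton_H1_ofMulAction
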